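/- arXiv:math/0512323 — 5 statements merged into one kernel-verified Lean document; each statement's English description precedes it below -/
import Mathlib

section
/- In a probabilistic normed space (V, ν, τ, τ*), if |α| ≤ |β| are real scalars, then ν_{βp} ≤ ν_{αp} (pointwise as distribution functions) for every p ∈ V. -/
open Filter Topology

noncomputable section

/-- A distance distribution function: nondecreasing, left-continuous,
vanishing on `(-∞,0]`, bounded by `1`. -/
def DDF (F : ℝ → ℝ) : Prop :=
  Monotone F ∧ (∀ x ≤ 0, F x = 0) ∧ (∀ x, F x ≤ 1) ∧
    ∀ x, Tendsto F (nhdsWithin x (Set.Iio x)) (nhds (F x))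

/-- The unit step at `0`. -/
def eps0 : ℝ → ℝ := fun x => if x ≤ 0 then 0 else 1

/-- The unit step at `c`. -/
def epsc (c : ℝ) : ℝ → ℝ := fun x => if x ≤ c then 0 else 1

/-- `ε∞`: identically 0 on `ℝ` (value 1 only at `+∞`). -/
def epsInf : ℝ → ℝ := fun _ => 0

/-- Membership in `D⁺`: the distribution function tends to `1` at `+∞`. -/
def InDPlus (F : ℝ → ℝ) : Prop := Tendsto F atTop (nhds 1)

/-- Weak convergence of distribution functions. -/
def WeakConv (Fn : ℕ → ℝ → ℝ) (F : ℝ → ℝ) : Prop :=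
  ∀ x, ContinuousAt F x → Tendsto (fun n => Fn n x) atTop (nhds (F x))

/-- A continuous triangle function on `Δ⁺`. -/
def IsTriangleFunction (τ : (ℝ → ℝ) → (ℝ → ℝ) → (ℝ → ℝ)) : Prop :=
  (∀ F G, DDF F → DDF G → DDF (τ F G)) ∧
  (∀ F G H, DDF F → DDF G → DDF H → τ (τ F G) H = τ F (τ G H)) ∧
  (∀ F G, DDF F → DDF G → τ F G = τ G F) ∧
  (∀ F G H, DDF F → DDF G → DDF H → F ≤ G → τ F H ≤ τ G H) ∧
  (∀ F, DDF F → τ F eps0 = F) ∧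
  (∀ (Fn : ℕ → ℝ → ℝ) F G, (∀ n, DDF (Fn n)) → DDF F → DDF G →
    WeakConv Fn F → WeakConv (fun n => τ (Fn n) G) (τ F G))

/-- A probabilistic normed space `(V, ν, τ, τ*)`. -/
structure IsPNSpace (V : Type) [AddCommGroup V] [Module ℝ V]
    (ν : V → ℝ → ℝ) (τ τs : (ℝ → ℝ) → (ℝ → ℝ) → (ℝ → ℝ)) : Prop where
  ddf : ∀ p, DDF (ν p)
  tri : IsTriangleFunction τ
  tris : IsTriangleFunction τs
  tle : ∀ F G, DDF F → DDF G → τ F G ≤ τs F G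
  n1 : ∀ p, ν p = eps0 ↔ p = 0
  n2 : ∀ p, ν (-p) = ν p
  n3 : ∀ p q, τ (ν p) (ν q) ≤ ν (p + q)
  n4 : ∀ (p : V) (l : ℝ), 0 ≤ l → l ≤ 1 →
    ν p ≤ τs (ν (l • p)) (ν ((1 - l) • p))

/-- Archimedean triangle function: no idempotents besides `ε₀` and `ε∞`. -/
def IsArchimedean (τ : (ℝ → ℝ) → (ℝ → ℝ) → (ℝ → ℝ)) : Prop :=
  ∀ F, DDF F → τ F F = F → F = eps0 ∨ F = epsInf

/-- Strong convergence of a sequence in a PN space. -/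
def StrongConv {V : Type} [AddCommGroup V] (ν : V → ℝ → ℝ)
    (q : ℕ → V) (p : V) : Prop :=
  ∀ l : ℝ, 0 < l → ∀ᶠ n in atTop, ν (q n - p) l > 1 - l

/-- Strongly Cauchy sequence in a PN space. -/
def StrongCauchy {V : Type} [AddCommGroup V] (ν : V → ℝ → ℝ) (q : ℕ → V) : Prop :=
  ∀ l : ℝ, 0 < l → ∃ N, ∀ m n, N ≤ m → N ≤ n → ν (q m - q n) l > 1 - l

/-- `A` is `D`-bounded: some `G ∈ D⁺` lies below all `ν p`, `p ∈ A`. -/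
def DBounded {V : Type} (ν : V → ℝ → ℝ) (A : Set V) : Prop :=
  ∃ G : ℝ → ℝ, DDF G ∧ InDPlus G ∧ ∀ p ∈ A, G ≤ ν p

/-- `A` is `D`-compact: every sequence in `A` has a subsequence strongly
convergent to a point of `A`. -/
def DCompact {V : Type} [AddCommGroup V] (ν : V → ℝ → ℝ) (A : Set V) : Prop :=
  ∀ q : ℕ → V, (∀ n, q n ∈ A) → ∃ φ : ℕ → ℕ, StrictMono φ ∧
    ∃ p ∈ A, StrongConv ν (q ∘ φ) p

/-- `A` is closed under strong convergence of sequences. -/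
def SeqClosed {V : Type} [AddCommGroup V] (ν : V → ℝ → ℝ) (A : Set V) : Prop :=
  ∀ (q : ℕ → V) (p : V), (∀ n, q n ∈ A) → StrongConv ν q p → p ∈ A

/-- The probabilistic radius `R_A(x) = l⁻ inf {ν p x : p ∈ A}`. -/
def probRadius {V : Type} (ν : V → ℝ → ℝ) (A : Set V) (x : ℝ) : ℝ :=
  ⨆ y : Set.Iio x, ⨅ p : A, ν (p : V) (y : ℝ)

lemma ddf_eps0 : DDF eps0 := by
  refine ⟨?_, ?_, ?_, ?_⟩
  · intro a b hab
    unfold eps0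
    split_ifs with h1 h2 h2 <;> norm_num <;> exact h1 (hab.trans h2)
  · intro x hx; simp [eps0, hx]
  · intro x; unfold eps0; split_ifs <;> norm_num
  · intro x
    rcases le_or_gt x 0 with hx | hx
    · have : eps0 x = 0 := by simp [eps0, hx]
      rw [this]
      refine Tendsto.congr' ?_ tendsto_const_nhds
      filter_upwards [self_mem_nhdsWithin] with y hy
      simp only [Set.mem_Iio] at hy
      simp [eps0, (hy.le.trans hx)]
    · have : eps0 x = 1 := by simp [eps0, not_le.mpr hx]
      rw [this]
      refine Tendsto.congr' ?_ tendsto_const_nhds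
      filter_upwards [inter_mem_nhdsWithin _ (Ioi_mem_nhds hx)] with y hy
      rcases hy with ⟨_, hy2⟩
      simp only [Set.mem_Ioi] at hy2
      simp [eps0, not_le.mpr hy2]

lemma ddf_le_eps0 {G : ℝ → ℝ} (hG : DDF G) : G ≤ eps0 := by
  intro x
  rcases le_or_gt x 0 with hx | hx
  · simp [eps0, hx, hG.2.1 x hx]
  · simpa [eps0, not_le.mpr hx] using hG.2.2.1 x

lemma tau_le_left {τs : (ℝ → ℝ) → (ℝ → ℝ) → (ℝ → ℝ)} (ht : IsTriangleFunction τs)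
    {F G : ℝ → ℝ} (hF : DDF F) (hG : DDF G) : τs F G ≤ F := by
  obtain ⟨_, _, comm, mono, unit, _⟩ := ht
  calc τs F G = τs G F := comm F G hF hG
    _ ≤ τs eps0 F := mono G eps0 F hG ddf_eps0 hF (ddf_le_eps0 hG)
    _ = τs F eps0 := comm eps0 F ddf_eps0 hF
    _ = F := unit F hF

lemma nu_abs_smul {V : Type} [AddCommGroup V] [Module ℝ V]
    {ν : V → ℝ → ℝ} {τ τs : (ℝ → ℝ) → (ℝ → ℝ) → (ℝ → ℝ)}
    (h : IsPNSpace V ν τ τs) (α : ℝ) (p : V) : ν (|α| • p) = ν (α • p) := by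
  rcases abs_choice α with h1 | h1
  · rw [h1]
  · rw [h1, neg_smul, h.n2]

/-- In a PN space, `|α| ≤ |β|` implies `ν (β • p) ≤ ν (α • p)`. -/
theorem statement2 {V : Type} [AddCommGroup V] [Module ℝ V]
    (ν : V → ℝ → ℝ) (τ τs : (ℝ → ℝ) → (ℝ → ℝ) → (ℝ → ℝ))
    (h : IsPNSpace V ν τ τs) (α β : ℝ) (hab : |α| ≤ |β|) (p : V) :
    ν (β • p) ≤ ν (α • p) := by
  rw [← nu_abs_smul h α p, ← nu_abs_smul h β p]
  set a := |α| with ha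
  set b := |β| with hb
  have ha0 : 0 ≤ a := abs_nonneg α
  have hb0 : 0 ≤ b := abs_nonneg β
  rcases eq_or_lt_of_le hb0 with hb' | hb'
  · have : a = 0 := le_antisymm (hab.trans hb'.symm.le) ha0
    rw [this, ← hb']
  · set l := a / b with hl
    have hl0 : 0 ≤ l := div_nonneg ha0 hb0
    have hl1 : l ≤ 1 := (div_le_one hb').mpr hab
    have key := h.n4 (b • p) l hl0 hl1
    have hsm : l • (b • p) = a • p := by
      rw [smul_smul, hl, div_mul_cancel₀ a hb'.ne']
    rw [hsm] at key
    exact key.trans (tau_le_left h.tris (h.ddf _) (h.ddf _))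
end
end

section
/- Let (ℝ, ν, τ, τ*) be a PN space whose probabilistic norm has the LG-property, i.e., for every x > 0, ν_p(x) → 0 as |p| → ∞. If A ⊆ ℝ is D-bounded, then A is bounded in the classical sense. -/
open Filter Topology

noncomputable section

/-- If the probabilistic norm on `ℝ` has the LG-property, then every
`D`-bounded set is classically bounded. -/
theorem statement5 (ν : ℝ → ℝ → ℝ) (τ τs : (ℝ → ℝ) → (ℝ → ℝ) → (ℝ → ℝ))
    (h : IsPNSpace ℝ ν τ τs)
    (hLG : ∀ x : ℝ, 0 < x →
      Tendsto (fun p : ℝ => ν p x) (comap (fun p : ℝ => |p|) atTop) (nhds 0))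
    (A : Set ℝ) (hA : DBounded ν A) :
    ∃ k : ℝ, 0 < k ∧ ∀ p ∈ A, |p| ≤ k := by
  obtain ⟨G, hGddf, hGD, hGle⟩ := hA
  -- pick x₀ with G x₀ > 1/2
  obtain ⟨x₀, hx₀⟩ := ((hGD.eventually (eventually_gt_nhds (by norm_num : (1:ℝ)/2 < 1))).and
    (eventually_gt_atTop 0)).exists
  have hx₀pos : (0:ℝ) < x₀ := hx₀.2
  have hGx₀ : (1:ℝ)/2 < G x₀ := hx₀.1
  have hev : ∀ᶠ p : ℝ in comap (fun p : ℝ => |p|) atTop, ν p x₀ < 1/2 :=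
    (hLG x₀ hx₀pos).eventually (eventually_lt_nhds (by norm_num : (0:ℝ) < 1/2))
  rw [eventually_comap, eventually_atTop] at hev
  obtain ⟨N, hN⟩ := hev
  refine ⟨max N 1, lt_of_lt_of_le one_pos (le_max_right _ _), fun p hp => ?_⟩
  by_contra hcon
  push_neg at hcon
  have h1 : ν p x₀ < 1/2 := hN |p| (le_of_lt (lt_of_le_of_lt (le_max_left _ _) hcon)) p rfl
  have h2 : G x₀ ≤ ν p x₀ := hGle p hp x₀
  linarith
end
end

section
/- Let (V, ν, τ, τ*) be a PN space in which ν(V) ⊆ D⁺ and D⁺ is invariant under τ (i.e., τ(F,G) ∈ D⁺ whenever F, G ∈ D⁺). If a sequence {p_m} strongly converges to p in V, then the set A = {p_m : m ∈ ℕ} is D-bounded. -/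
open Filter Topology

noncomputable section

/-!
The distribution functions `ν (q n - p)` are bounded below, uniformly in `n`, by a function of
`D⁺`: finitely many of them are each in `D⁺`, and strong convergence puts all the others above
`1 - ε` from `ε` on. The left-continuous regularization `G` of their pointwise infimum is then a
distance distribution function in `D⁺`, and `τ G (ν p) ≤ τ (ν (q n - p)) (ν p) ≤ ν (q n)`.
-/

open Function

lemma DDF.nonneg {F : ℝ → ℝ} (hF : DDF F) (x : ℝ) : 0 ≤ F x := by
  rcases le_or_gt x 0 with hx | hx
  · rw [hF.2.1 x hx]
  · calc (0 : ℝ) = F 0 := (hF.2.1 0 le_rfl).symm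
      _ ≤ F x := hF.1 hx.le

section LowerEnvelope

variable {ι : Type*} {F : ι → ℝ → ℝ}

lemma bddBelow_range_of_ddf (hF : ∀ i, DDF (F i)) (x : ℝ) : BddBelow (Set.range fun i => F i x) :=
  ⟨0, by rintro _ ⟨i, rfl⟩; exact (hF i).nonneg x⟩

lemma iInf_le_of_ddf (hF : ∀ i, DDF (F i)) (i : ι) (x : ℝ) : ⨅ j, F j x ≤ F i x :=
  ciInf_le (bddBelow_range_of_ddf hF x) i

lemma monotone_iInf_of_ddf (hF : ∀ i, DDF (F i)) : Monotone fun x => ⨅ i, F i x :=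
  fun _ _ hxy => ciInf_mono (bddBelow_range_of_ddf hF _) fun i => (hF i).1 hxy

lemma leftLim_iInf_le (hF : ∀ i, DDF (F i)) (i : ι) : leftLim (fun x => ⨅ j, F j x) ≤ F i :=
  fun x => ((monotone_iInf_of_ddf hF).leftLim_le le_rfl).trans (iInf_le_of_ddf hF i x)

lemma ddf_leftLim_iInf [Nonempty ι] (hF : ∀ i, DDF (F i)) : DDF (leftLim fun x => ⨅ i, F i x) := by
  have hmono := monotone_iInf_of_ddf hF
  obtain ⟨i⟩ := ‹Nonempty ι›
  have hle := leftLim_iInf_le hF i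
  refine ⟨hmono.leftLim, fun x hx => ?_, fun x => (hle x).trans ((hF i).2.2.1 x), fun x => ?_⟩
  · refine le_antisymm ((hle x).trans_eq ((hF i).2.1 x hx)) ?_
    calc (0 : ℝ) ≤ ⨅ j, F j (x - 1) := Real.iInf_nonneg fun j => (hF j).nonneg _
      _ ≤ _ := hmono.le_leftLim (sub_one_lt x)
  · exact (continuousWithinAt_leftLim_Iic (hmono.tendsto_leftLim x)).mono Set.Iio_subset_Iic_self

end LowerEnvelope

lemma tendsto_iInf_of_eventually_gt {F : ℕ → ℝ → ℝ} (hF : ∀ n, DDF (F n))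
    (hD : ∀ n, InDPlus (F n)) (hconv : ∀ l : ℝ, 0 < l → ∀ᶠ n in atTop, F n l > 1 - l) :
    Tendsto (fun x => ⨅ n, F n x) atTop (𝓝 1) := by
  refine tendsto_order.2 ⟨fun c hc => ?_, fun c hc => Eventually.of_forall fun x =>
    ((iInf_le_of_ddf hF 0 x).trans ((hF 0).2.2.1 x)).trans_lt hc⟩
  obtain ⟨ε, hε, hcε⟩ : ∃ ε : ℝ, 0 < ε ∧ c < 1 - ε := ⟨(1 - c) / 2, by linarith, by linarith⟩
  obtain ⟨N, hN⟩ := eventually_atTop.1 (hconv ε hε)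
  have hhead : ∀ᶠ x in atTop, ∀ n ∈ Finset.range N, 1 - ε < F n x :=
    (Finset.eventually_all _).2 fun n _ => (hD n).eventually (eventually_gt_nhds (by linarith))
  filter_upwards [hhead, eventually_ge_atTop ε] with x hhead hεx
  refine hcε.trans_le (le_ciInf fun n => ?_)
  rcases lt_or_ge n N with hn | hn
  · exact (hhead n (Finset.mem_range.2 hn)).le
  · exact (hN n hn).le.trans ((hF n).1 hεx)

/-- If `ν(V) ⊆ D⁺`, `D⁺` is `τ`-invariant, and `p_m → p` strongly, then
`{p_m : m ∈ ℕ}` is `D`-bounded. -/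
theorem statement11 {V : Type} [AddCommGroup V] [Module ℝ V]
    (ν : V → ℝ → ℝ) (τ τs : (ℝ → ℝ) → (ℝ → ℝ) → (ℝ → ℝ))
    (h : IsPNSpace V ν τ τs)
    (hD : ∀ p : V, InDPlus (ν p))
    (hInv : ∀ F G, DDF F → DDF G → InDPlus F → InDPlus G → InDPlus (τ F G))
    (q : ℕ → V) (p : V) (hc : StrongConv ν q p) :
    DBounded ν (Set.range q) := by
  have hF : ∀ n, DDF (ν (q n - p)) := fun n => h.ddf _
  set G := leftLim fun x => ⨅ n, ν (q n - p) x
  have hG : DDF G := ddf_leftLim_iInf hF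
  have hGD : InDPlus G :=
    tendsto_leftLim_atTop_of_tendsto (tendsto_iInf_of_eventually_gt hF (fun n => hD _) hc)
  refine ⟨τ G (ν p), h.tri.1 _ _ hG (h.ddf p), hInv _ _ hG (h.ddf p) hGD (hD p), ?_⟩
  rintro _ ⟨n, rfl⟩
  calc τ G (ν p) ≤ τ (ν (q n - p)) (ν p) :=
        h.tri.2.2.2.1 _ _ _ hG (hF n) (h.ddf p) (leftLim_iInf_le hF n)
    _ ≤ ν (q n - p + p) := h.n3 _ _
    _ = ν (q n) := by rw [sub_add_cancel]

end
end

section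
/- Equip ℝ with the probabilistic norm ν_p = ε_{|p|/(a+|p|)} for fixed a > 0 (where ε_c is the unit step at c). Then ℝ is D-bounded and closed in this PN space, but ℝ is not D-compact: the sequence {2^m} has no strongly convergent subsequence. -/
open Filter Topology

noncomputable section

/-! Every `ν p` lies above `ε₁`, which gives `D`-boundedness. Conversely `ν (q n - p)` is a unit
step, so strong convergence forces the step points `‖q n - p‖ / (a + ‖q n - p‖)` to tend to `0`,
i.e. `q n → p` in norm; the unbounded sequence `2 ^ φ n` cannot do that. -/

lemma epsc_ddf {c : ℝ} (hc : 0 ≤ c) : DDF (epsc c) := by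
  refine ⟨?_, fun x hx => by simp [epsc, hx.trans hc],
    fun x => by unfold epsc; split_ifs <;> norm_num, fun x => ?_⟩
  · intro x y hxy
    unfold epsc
    split_ifs <;> first | rfl | linarith
  · rcases le_or_gt x c with hx | hx
    · rw [show epsc c x = 0 from if_pos hx]
      refine tendsto_const_nhds.congr' ?_
      filter_upwards [self_mem_nhdsWithin] with y (hy : y < x)
      exact (if_pos (hy.le.trans hx)).symm
    · rw [show epsc c x = 1 from if_neg hx.not_ge]
      refine tendsto_const_nhds.congr' ?_
      filter_upwards [nhdsWithin_le_nhds (eventually_gt_nhds hx)] with y hy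
      exact (if_neg hy.not_ge).symm

lemma epsc_anti {c c' : ℝ} (h : c ≤ c') : epsc c' ≤ epsc c := by
  intro x
  unfold epsc
  split_ifs <;> first | rfl | linarith

lemma inDPlus_epsc (c : ℝ) : InDPlus (epsc c) :=
  tendsto_const_nhds.congr' <| (eventually_gt_atTop c).mono fun x hx => by simp [epsc, hx.not_ge]

lemma lt_of_one_sub_lt_epsc {c l : ℝ} (hl : l ≤ 1) (h : 1 - l < epsc c l) : c < l := by
  by_contra! hcl
  simp only [epsc, if_pos hcl] at h
  linarith

lemma div_add_self_lt_div_add_self_iff {a s t : ℝ} (ha : 0 < a) (hs : 0 ≤ s) (ht : 0 ≤ t) :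
    s / (a + s) < t / (a + t) ↔ s < t := by
  rw [div_lt_div_iff₀ (by linarith) (by linarith)]
  constructor <;> intro h <;> nlinarith

section SeminormedAddCommGroup

variable {V : Type} [SeminormedAddCommGroup V]

lemma dBounded_epsc_norm_div {a : ℝ} (ha : 0 < a) (A : Set V) :
    DBounded (fun p : V => epsc (‖p‖ / (a + ‖p‖))) A :=
  ⟨epsc 1, epsc_ddf zero_le_one, inDPlus_epsc 1, fun p _ =>
    epsc_anti <| (div_le_one (by positivity)).2 (by linarith)⟩

lemma StrongConv.tendsto_of_epsc_norm_div {a : ℝ} (ha : 0 < a) {q : ℕ → V} {p : V}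
    (h : StrongConv (fun r : V => epsc (‖r‖ / (a + ‖r‖))) q p) : Tendsto q atTop (𝓝 p) := by
  rw [tendsto_iff_norm_sub_tendsto_zero, Metric.tendsto_atTop]
  intro ε hε
  have hl : ε / (a + ε) ≤ 1 := (div_le_one (by linarith)).2 (by linarith)
  obtain ⟨N, hN⟩ := eventually_atTop.1 (h (ε / (a + ε)) (by positivity))
  refine ⟨N, fun n hn => ?_⟩
  have := lt_of_one_sub_lt_epsc hl (hN n hn)
  rw [div_add_self_lt_div_add_self_iff ha (norm_nonneg _) hε.le] at this
  simpa [Real.dist_eq] using this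

end SeminormedAddCommGroup

lemma not_strongConv_two_pow {a : ℝ} (ha : 0 < a) {φ : ℕ → ℕ} (hφ : StrictMono φ) (p : ℝ) :
    ¬ StrongConv (fun r : ℝ => epsc (|r| / (a + |r|))) (fun n => (2 : ℝ) ^ φ n) p := fun h =>
  not_tendsto_nhds_of_tendsto_atTop
    ((tendsto_pow_atTop_atTop_of_one_lt one_lt_two).comp hφ.tendsto_atTop) p
    (StrongConv.tendsto_of_epsc_norm_div (V := ℝ) ha h)

/-- With `ν p = ε_{|p|/(a+|p|)}`, `ℝ` is `D`-bounded and closed but not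
`D`-compact: `{2^m}` has no strongly convergent subsequence. -/
theorem statement13 (a : ℝ) (ha : 0 < a) :
    DBounded (fun p : ℝ => epsc (|p| / (a + |p|))) Set.univ ∧
    SeqClosed (fun p : ℝ => epsc (|p| / (a + |p|))) Set.univ ∧
    ¬ DCompact (fun p : ℝ => epsc (|p| / (a + |p|))) Set.univ ∧
    (∀ φ : ℕ → ℕ, StrictMono φ → ∀ p : ℝ,
      ¬ StrongConv (fun r : ℝ => epsc (|r| / (a + |r|)))
        (fun n => (2 : ℝ) ^ φ n) p) := by
  refine ⟨dBounded_epsc_norm_div (V := ℝ) ha _, fun _ _ _ _ => trivial, fun hcomp => ?_,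
    fun φ hφ => not_strongConv_two_pow ha hφ⟩
  obtain ⟨φ, hφ, p, -, hconv⟩ := hcomp (fun n => (2 : ℝ) ^ n) fun _ => trivial
  exact not_strongConv_two_pow ha hφ p hconv
end
end

section
/- In the PN space (ℝ, ν, τ_W, τ_M) with ν_0 = ε₀ and ν_p = (1/(|p|+2))·ε₀ + ((|p|+1)/(|p|+2))·ε_∞ for p ≠ 0, the sequence {1/n} does not strongly converge to 0; in particular this probabilistic norm is not equivalent to the probabilistic norm μ_p = ε_{|p|} on ℝ, under which {1/n} converges to 0. -/
open Filter Topology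

noncomputable section

/-- In `(ℝ, ν, τ_W, τ_M)` with `ν p = (1/(|p|+2)) ε₀ + ((|p|+1)/(|p|+2)) ε∞`
for `p ≠ 0`, the sequence `{1/n}` does not strongly converge to `0`, while
under `μ p = ε_{|p|}` it does; hence the two norms are not equivalent. -/
theorem statement17 :
    ¬ StrongConv (fun (p : ℝ) (x : ℝ) => if p = 0 then eps0 x
        else (1 / (|p| + 2)) * eps0 x) (fun n : ℕ => 1 / ((n : ℝ) + 1)) 0 ∧
    StrongConv (fun r : ℝ => epsc |r|) (fun n : ℕ => 1 / ((n : ℝ) + 1)) 0 ∧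
    ¬ (∀ (q : ℕ → ℝ) (p : ℝ),
        StrongConv (fun (p : ℝ) (x : ℝ) => if p = 0 then eps0 x
            else (1 / (|p| + 2)) * eps0 x) q p ↔
        StrongConv (fun r : ℝ => epsc |r|) q p) := by
  have hν : ¬ StrongConv (fun (p : ℝ) (x : ℝ) => if p = 0 then eps0 x
      else (1 / (|p| + 2)) * eps0 x) (fun n : ℕ => 1 / ((n : ℝ) + 1)) 0 := by
    intro h
    have h2 := h (1/2) (by norm_num)
    rw [Filter.eventually_atTop] at h2
    obtain ⟨N, hN⟩ := h2
    have := hN N le_rfl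
    have hne : (1 : ℝ) / ((N : ℝ) + 1) - 0 ≠ 0 := by
      have : (0:ℝ) < (N:ℝ)+1 := by positivity
      simp; positivity
    simp only [hne, if_neg] at this
    simp only [if_false] at this
    have habs : |(1 : ℝ) / ((N : ℝ) + 1) - 0| ≥ 0 := abs_nonneg _
    have heps : eps0 (1/2 : ℝ) = 1 := by norm_num [eps0]
    rw [heps, mul_one] at this
    have hle : (1:ℝ) / (|(1 : ℝ) / ((N : ℝ) + 1) - 0| + 2) ≤ 1/2 := by
      rw [div_le_div_iff₀ (by positivity) (by norm_num)]
      linarith [abs_nonneg ((1 : ℝ) / ((N : ℝ) + 1) - 0)]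
    linarith
  have hμ : StrongConv (fun r : ℝ => epsc |r|) (fun n : ℕ => 1 / ((n : ℝ) + 1)) 0 := by
    intro l hl
    obtain ⟨N, hN⟩ := exists_nat_gt (1/l)
    rw [Filter.eventually_atTop]
    refine ⟨N, fun n hn => ?_⟩
    have hlt : (1 : ℝ) / ((n : ℝ) + 1) < l := by
      rw [div_lt_iff₀ (by positivity)]
      have : (1:ℝ)/l < (n:ℝ)+1 := lt_of_lt_of_le hN (by exact_mod_cast Nat.le_succ_of_le hn)
      calc (1:ℝ) = ((1:ℝ)/l) * l := by field_simp
        _ < ((n:ℝ)+1) * l := by exact mul_lt_mul_of_pos_right this hl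
        _ = l * ((n:ℝ)+1) := mul_comm _ _
    have habs : |(1 : ℝ) / ((n : ℝ) + 1) - 0| = 1 / ((n : ℝ) + 1) := by
      rw [sub_zero, abs_of_pos]; positivity
    show epsc |(1 : ℝ) / ((n : ℝ) + 1) - 0| l > 1 - l
    rw [habs]
    have : epsc ((1:ℝ)/((n:ℝ)+1)) l = 1 := by
      simp only [epsc, if_neg (not_le.mpr hlt)]
    rw [this]; linarith
  exact ⟨hν, hμ, fun h => hν ((h _ _).mpr hμ)⟩
end
end
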